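/- arXiv:2604.21603 — 6 statements merged into one kernel-verified Lean document; each statement's English description precedes it below -/
import Mathlib

section
/- Every completion-optimal repair is globally-optimal, and every globally-optimal repair is Pareto-optimal: CRep(K,≻) ⊆ GRep(K,≻) ⊆ PRep(K,≻). -/
variable {α : Type*}

def DownwardClosed (Cons : Set (Set α)) : Prop :=
  ∀ S ∈ Cons, ∀ S' ⊆ S, S' ∈ Cons

def IsConflict (D : Set α) (Cons : Set (Set α)) (C : Set α) : Prop :=
  C ⊆ D ∧ C ∉ Cons ∧ ∀ C' ⊂ C, C' ∈ Cons

def IsRepair (D : Set α) (Cons : Set (Set α)) (R : Set α) : Prop :=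
  R ⊆ D ∧ R ∈ Cons ∧ ∀ S, S ⊆ D → S ∈ Cons → R ⊆ S → S = R

def Acyclic (pr : α → α → Prop) : Prop :=
  ∀ a, ¬ Relation.TransGen pr a a

def PriorityRel (D : Set α) (Cons : Set (Set α)) (pr : α → α → Prop) : Prop :=
  Acyclic pr ∧ ∀ a b, pr a b → ∃ C, IsConflict D Cons C ∧ a ∈ C ∧ b ∈ C

def ParetoImp (Cons : Set (Set α)) (pr : α → α → Prop) (D R B : Set α) : Prop :=
  B ⊆ D ∧ B ∈ Cons ∧ ∃ β ∈ B \ R, ∀ a ∈ R \ B, pr β a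

def GlobalImp (Cons : Set (Set α)) (pr : α → α → Prop) (D R B : Set α) : Prop :=
  B ⊆ D ∧ B ∈ Cons ∧ B ≠ R ∧ ∀ a ∈ R \ B, ∃ β ∈ B \ R, pr β a

def ParetoOpt (Cons : Set (Set α)) (pr : α → α → Prop) (D R : Set α) : Prop :=
  IsRepair D Cons R ∧ ∀ B, ¬ ParetoImp Cons pr D R B

def GlobalOpt (Cons : Set (Set α)) (pr : α → α → Prop) (D R : Set α) : Prop :=
  IsRepair D Cons R ∧ ∀ B, ¬ GlobalImp Cons pr D R B

def TotalPrio (D : Set α) (Cons : Set (Set α)) (pr : α → α → Prop) : Prop :=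
  ∀ a b, a ≠ b → (∃ C, IsConflict D Cons C ∧ a ∈ C ∧ b ∈ C) → pr a b ∨ pr b a

def IsCompletion (D : Set α) (Cons : Set (Set α)) (pr pr' : α → α → Prop) : Prop :=
  PriorityRel D Cons pr' ∧ TotalPrio D Cons pr' ∧ ∀ a b, pr a b → pr' a b

def ComplOpt (Cons : Set (Set α)) (pr : α → α → Prop) (D R : Set α) : Prop :=
  ∃ pr', IsCompletion D Cons pr pr' ∧ GlobalOpt Cons pr' D R

/-- Every completion-optimal repair is globally-optimal, and every globally-optimal
repair is Pareto-optimal: CRep(K,≻) ⊆ GRep(K,≻) ⊆ PRep(K,≻). -/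
theorem crep_subset_grep_subset_prep
    (D : Set α) (hD : D.Finite) (Cons : Set (Set α))
    (hdc : DownwardClosed Cons) (hempty : (∅ : Set α) ∈ Cons)
    (pr : α → α → Prop) (hpr : PriorityRel D Cons pr) :
    (∀ R, ComplOpt Cons pr D R → GlobalOpt Cons pr D R) ∧
    (∀ R, GlobalOpt Cons pr D R → ParetoOpt Cons pr D R) := by
  constructor
  · rintro R ⟨pr', ⟨_, _, hext⟩, hrep, hopt⟩
    refine ⟨hrep, fun B ⟨hBD, hBC, hne, himp⟩ => hopt B ⟨hBD, hBC, hne, ?_⟩⟩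
    intro a ha
    obtain ⟨β, hβ, hβa⟩ := himp a ha
    exact ⟨β, hβ, hext _ _ hβa⟩
  · rintro R ⟨hrep, hopt⟩
    refine ⟨hrep, fun B ⟨hBD, hBC, β, hβ, hβa⟩ => hopt B ⟨hBD, hBC, ?_, ?_⟩⟩
    · rintro rfl; exact hβ.2 hβ.1
    · exact fun a ha => ⟨β, hβ, hβa a ha⟩
end

section
/- For any prioritized knowledge base with finite dataset and acyclic priority relation, there exists at least one Pareto-optimal repair. -/
variable {α : Type*}

/-! Acyclicity makes the transitive closure of `≻` a strict partial order, with preferred facts on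
top, and any such order induces the colex order on finite sets. Take a repair `R` that is
colex-maximal among the finitely many repairs. If `B` were a Pareto improvement of `R` through `β`,
a repair `R'` extending `(R ∩ B) ∪ {β}` would colex-dominate `R`: every fact of `R \ R'` lies
outside `B`, hence below `β ∈ R' \ R`. -/

open Finset Colex

section Repairs

variable {D : Set α} {Cons : Set (Set α)} {pr : α → α → Prop}

lemma exists_isRepair_superset (hD : D.Finite) {S : Set α} (hSD : S ⊆ D) (hS : S ∈ Cons) :
    ∃ R : Finset α, S ⊆ R ∧ IsRepair D Cons R := by
  have hfin : {T : Set α | S ⊆ T ∧ T ⊆ D ∧ T ∈ Cons}.Finite :=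
    hD.finite_subsets.subset fun T hT => hT.2.1
  obtain ⟨R, ⟨hSR, hRD, hR⟩, hmax⟩ := hfin.exists_maximal ⟨S, subset_rfl, hSD, hS⟩
  refine ⟨(hD.subset hRD).toFinset, by simpa using hSR, ?_⟩
  rw [Set.Finite.coe_toFinset]
  exact ⟨hRD, hR, fun T hTD hT hRT => (hmax ⟨hSR.trans hRT, hTD, hT⟩ hRT).antisymm hRT⟩

lemma finite_setOf_isRepair (hD : D.Finite) : {R : Finset α | IsRepair D Cons R}.Finite :=
  hD.finite_subsets.preimage coe_injective.injOn |>.subset fun _ hR => hR.1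

lemma ParetoImp.exists_isRepair_toColex_lt [PartialOrder α] (hD : D.Finite)
    (hdc : DownwardClosed Cons) (hpr : ∀ a b, pr a b → b ≤ a) {R : Finset α} {B : Set α}
    (hB : ParetoImp Cons pr D R B) :
    ∃ R' : Finset α, IsRepair D Cons R' ∧ toColex R < toColex R' := by
  obtain ⟨hBD, hB, β, ⟨hβB, hβR⟩, hβ⟩ := hB
  have hsub : ↑R ∩ B ∪ {β} ⊆ B := Set.union_subset Set.inter_subset_right (by simpa using hβB)
  obtain ⟨R', hR'sub, hR'⟩ := exists_isRepair_superset hD (hsub.trans hBD) (hdc B hB _ hsub)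
  have hβR' : β ∈ R' := hR'sub (Or.inr rfl)
  refine ⟨R', hR', toColex_lt_toColex.2 ⟨fun h => hβR (h ▸ hβR'), fun a haR haR' => ?_⟩⟩
  have haB : a ∉ B := fun haB => haR' (hR'sub (Or.inl ⟨haR, haB⟩))
  exact ⟨β, hβR', hβR, hpr β a (hβ a ⟨haR, haB⟩)⟩

lemma exists_paretoOpt_of_partialOrder [PartialOrder α] (hD : D.Finite)
    (hdc : DownwardClosed Cons) (hempty : (∅ : Set α) ∈ Cons) (hpr : ∀ a b, pr a b → b ≤ a) :
    ∃ R, ParetoOpt Cons pr D R := by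
  obtain ⟨R₀, -, hR₀⟩ := exists_isRepair_superset hD (Set.empty_subset D) hempty
  obtain ⟨R, hR, hmax⟩ := (finite_setOf_isRepair hD).exists_maximalFor toColex _ ⟨R₀, hR₀⟩
  refine ⟨R, hR, fun B hB => ?_⟩
  obtain ⟨R', hR', hlt⟩ := hB.exists_isRepair_toColex_lt hD hdc hpr
  exact (hmax hR' hlt.le).not_gt hlt

end Repairs

abbrev Acyclic.partialOrder {pr : α → α → Prop} (h : Acyclic pr) : PartialOrder α :=
  letI : IsStrictOrder α fun a b => Relation.TransGen pr b a :=
    { irrefl := h, trans := fun _ _ _ hab hbc => hbc.trans hab }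
  partialOrderOfSO fun a b => Relation.TransGen pr b a

/-- For any prioritized KB with finite dataset and acyclic priority relation, there
exists at least one Pareto-optimal repair. -/
theorem exists_paretoOpt_repair
    (D : Set α) (hD : D.Finite) (Cons : Set (Set α))
    (hdc : DownwardClosed Cons) (hempty : (∅ : Set α) ∈ Cons)
    (pr : α → α → Prop) (hpr : PriorityRel D Cons pr) :
    ∃ R, ParetoOpt Cons pr D R :=
  letI := hpr.1.partialOrder
  exists_paretoOpt_of_partialOrder hD hdc hempty fun _ _ h => Or.inr (.single h)
end

section
/- If the priority relation ≻ is total (any two distinct facts co-occurring in a conflict are comparable), then the globally-optimal repair is unique: there is exactly one repair with no global improvement. -/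
variable {α : Type*}

private lemma wf_aux {D : Set α} (hD : D.Finite) {r : α → α → Prop}
    (hacyc : Acyclic r) (hmem : ∀ a b, r a b → a ∈ D ∧ b ∈ D) :
    WellFounded r := by
  classical
  set m : α → ℕ := fun x => (hD.toFinset.filter (fun c => Relation.TransGen r c x)).card with hm
  have key : ∀ a b, r a b → m a < m b := by
    intro a b hab
    apply Finset.card_lt_card
    constructor
    · intro c hc
      simp only [Finset.mem_filter] at hc ⊢
      exact ⟨hc.1, hc.2.trans (Relation.TransGen.single hab)⟩
    · intro hsub
      have ha : a ∈ hD.toFinset := (Set.Finite.mem_toFinset hD).2 (hmem a b hab).1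
      have h1 : a ∈ hD.toFinset.filter (fun c => Relation.TransGen r c b) := by
        simp only [Finset.mem_filter]
        exact ⟨ha, Relation.TransGen.single hab⟩
      have h2 := hsub h1
      simp only [Finset.mem_filter] at h2
      exact hacyc a h2.2
  exact Subrelation.wf (fun {a b} h => key a b h) (InvImage.wf m Nat.lt_wfRel.wf)

private lemma exists_conflict_aux {D : Set α} (hD : D.Finite) {Cons : Set (Set α)} :
    ∀ n (S : Set α), S.ncard = n → S ⊆ D → S ∉ Cons →
      ∃ C, C ⊆ S ∧ IsConflict D Cons C := by
  intro n
  induction n using Nat.strong_induction_on with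
  | _ n IH =>
    intro S hn hS hbad
    by_cases h : ∀ C' ⊂ S, C' ∈ Cons
    · exact ⟨S, subset_rfl, hS, hbad, h⟩
    · push_neg at h
      obtain ⟨C', hC'S, hC'⟩ := h
      have hfin : S.Finite := hD.subset hS
      obtain ⟨C, hCC', hC⟩ := IH C'.ncard (by rw [← hn]; exact Set.ncard_lt_ncard hC'S hfin)
        C' rfl (hC'S.subset.trans hS) hC'
      exact ⟨C, hCC'.trans hC'S.subset, hC⟩

private lemma exists_conflict {D : Set α} (hD : D.Finite) {Cons : Set (Set α)}
    {S : Set α} (hS : S ⊆ D) (hbad : S ∉ Cons) :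
    ∃ C, C ⊆ S ∧ IsConflict D Cons C :=
  exists_conflict_aux hD S.ncard S rfl hS hbad

private def greedy (D : Set α) (Cons : Set (Set α)) (pr : α → α → Prop)
    (wf : WellFounded pr) : α → Prop :=
  wf.fix (C := fun _ => Prop) (fun a IH => a ∈ D ∧ ¬ ∃ C, IsConflict D Cons C ∧ a ∈ C ∧
    ∀ b ∈ C, b ≠ a → ∃ h : pr b a, IH b h)

private lemma greedy_iff (D : Set α) (Cons : Set (Set α)) (pr : α → α → Prop)
    (wf : WellFounded pr) (a : α) :
    greedy D Cons pr wf a ↔ a ∈ D ∧ ¬ ∃ C, IsConflict D Cons C ∧ a ∈ C ∧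
      ∀ b ∈ C, b ≠ a → pr b a ∧ greedy D Cons pr wf b := by
  unfold greedy
  rw [WellFounded.fix_eq]
  simp only [exists_prop]

/-- If the priority relation is total (any two distinct facts co-occurring in a conflict
are comparable), then there is exactly one repair with no global improvement. -/
theorem globalOpt_unique_of_total
    (D : Set α) (hD : D.Finite) (Cons : Set (Set α))
    (hdc : DownwardClosed Cons) (hempty : (∅ : Set α) ∈ Cons)
    (hsing : ∀ a ∈ D, ({a} : Set α) ∈ Cons)
    (pr : α → α → Prop) (hpr : PriorityRel D Cons pr)
    (htot : TotalPrio D Cons pr) :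
    ∃! R, GlobalOpt Cons pr D R := by
  classical
  have hmem : ∀ a b, pr a b → a ∈ D ∧ b ∈ D := by
    intro a b hab
    obtain ⟨C, hC, haC, hbC⟩ := hpr.2 a b hab
    exact ⟨hC.1 haC, hC.1 hbC⟩
  have wf : WellFounded pr := wf_aux hD hpr.1 hmem
  have wfflip : WellFounded (fun a b => pr b a) := by
    refine wf_aux hD ?_ (fun a b h => ⟨(hmem b a h).2, (hmem b a h).1⟩)
    intro a h
    exact hpr.1 a (Relation.transGen_swap.mp h)
  set G : Set α := {a | greedy D Cons pr wf a} with hGdef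
  have hG : ∀ a, a ∈ G ↔ a ∈ D ∧ ¬ ∃ C, IsConflict D Cons C ∧ a ∈ C ∧
      ∀ b ∈ C, b ≠ a → pr b a ∧ b ∈ G := fun a => greedy_iff D Cons pr wf a
  have hGD : G ⊆ D := fun a ha => ((hG a).1 ha).1
  -- if a ∈ D but a ∉ G, there is a blocking conflict
  have hblock : ∀ a ∈ D, a ∉ G → ∃ C, IsConflict D Cons C ∧ a ∈ C ∧
      ∀ b ∈ C, b ≠ a → pr b a ∧ b ∈ G := by
    intro a haD haG
    by_contra h
    exact haG ((hG a).2 ⟨haD, h⟩)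
  -- G is consistent
  have hGcons : G ∈ Cons := by
    by_contra hbad
    obtain ⟨C, hCG, hC⟩ := exists_conflict hD hGD hbad
    have hne : C.Nonempty := by
      rcases Set.eq_empty_or_nonempty C with h | h
      · exact absurd (h ▸ hempty) hC.2.1
      · exact h
    obtain ⟨m, hmC, hmin⟩ := wfflip.has_min C hne
    have hmG : m ∈ G := hCG hmC
    refine ((hG m).1 hmG).2 ⟨C, hC, hmC, ?_⟩
    intro b hbC hbm
    have := htot b m hbm ⟨C, hC, hbC, hmC⟩
    rcases this with h | h
    · exact ⟨h, hCG hbC⟩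
    · exact absurd h (hmin b hbC)
  -- G is a repair
  have hGrep : IsRepair D Cons G := by
    refine ⟨hGD, hGcons, ?_⟩
    intro S hSD hScons hGS
    by_contra hne
    have : ∃ a, a ∈ S ∧ a ∉ G := by
      by_contra h
      push_neg at h
      exact hne (Set.Subset.antisymm h hGS)
    obtain ⟨a, haS, haG⟩ := this
    obtain ⟨C, hC, haC, hall⟩ := hblock a (hSD haS) haG
    have hCS : C ⊆ S := by
      intro b hbC
      by_cases hba : b = a
      · exact hba ▸ haS
      · exact hGS (hall b hbC hba).2
    exact hC.2.1 (hdc S hScons C hCS)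
  -- G is globally optimal
  have hGopt : GlobalOpt Cons pr D G := by
    refine ⟨hGrep, ?_⟩
    rintro B ⟨hBD, hBcons, hBne, himp⟩
    have hne : ((G \ B) ∪ (B \ G)).Nonempty := by
      rcases Set.eq_empty_or_nonempty ((G \ B) ∪ (B \ G)) with h | h
      · rw [Set.union_empty_iff] at h
        exact absurd (Set.Subset.antisymm (Set.diff_eq_empty.mp h.2)
          (Set.diff_eq_empty.mp h.1)) hBne
      · exact h
    obtain ⟨m, hmΔ, hmin⟩ := wf.has_min _ hne
    rcases hmΔ with hm | hm
    · obtain ⟨β, hβ, hβm⟩ := himp m hm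
      exact hmin β (Or.inr hβ) hβm
    · obtain ⟨C, hC, hmC, hall⟩ := hblock m (hBD hm.1) hm.2
      have hCB : C ⊆ B := by
        intro b hbC
        by_cases hbm : b = m
        · exact hbm ▸ hm.1
        · obtain ⟨hpb, hbG⟩ := hall b hbC hbm
          by_contra hbB
          exact hmin b (Or.inl ⟨hbG, hbB⟩) hpb
      exact hC.2.1 (hdc B hBcons C hCB)
  -- uniqueness
  refine ⟨G, hGopt, ?_⟩
  intro R hR
  by_contra hne
  have hRD : R ⊆ D := hR.1.1
  have hRcons : R ∈ Cons := hR.1.2.1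
  have hΔne : ((R \ G) ∪ (G \ R)).Nonempty := by
    rcases Set.eq_empty_or_nonempty ((R \ G) ∪ (G \ R)) with h | h
    · rw [Set.union_empty_iff] at h
      exact absurd (Set.Subset.antisymm (Set.diff_eq_empty.mp h.1)
        (Set.diff_eq_empty.mp h.2)) hne
    · exact h
  obtain ⟨m, hmΔ, hmin⟩ := wf.has_min _ hΔne
  rcases hmΔ with hm | hm
  · -- m ∈ R \ G : blocking conflict lies inside R, contradicting consistency of R
    obtain ⟨C, hC, hmC, hall⟩ := hblock m (hRD hm.1) hm.2
    have hCR : C ⊆ R := by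
      intro b hbC
      by_cases hbm : b = m
      · exact hbm ▸ hm.1
      · obtain ⟨hpb, hbG⟩ := hall b hbC hbm
        by_contra hbR
        exact hmin b (Or.inr ⟨hbG, hbR⟩) hpb
    exact hC.2.1 (hdc R hRcons C hCR)
  · -- m ∈ G \ R : build a global improvement of R
    have hmD : m ∈ D := hGD hm.1
    set B : Set α := {x ∈ R | ¬ pr m x} ∪ {m} with hBdef
    have hBD : B ⊆ D := by
      intro x hx
      rcases hx with hx | hx
      · exact hRD hx.1
      · exact hx ▸ hmD
    have hBcons : B ∈ Cons := by
      by_contra hbad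
      obtain ⟨C', hC'B, hC'⟩ := exists_conflict hD hBD hbad
      by_cases hmC' : m ∈ C'
      · -- every other element of C' is beaten by m's blockers; use m ∈ G
        have hallC' : ∀ b ∈ C', b ≠ m → pr b m := by
          intro b hbC' hbm
          have hbB := hC'B hbC'
          have hbR : b ∈ R ∧ ¬ pr m b := by
            rcases hbB with h | h
            · exact h
            · exact absurd h hbm
          rcases htot b m hbm ⟨C', hC', hbC', hmC'⟩ with h | h
          · exact h
          · exact absurd h hbR.2
        have := ((hG m).1 hm.1).2
        apply this
        refine ⟨C', hC', hmC', ?_⟩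
        intro b hbC' hbm
        refine ⟨hallC' b hbC' hbm, ?_⟩
        by_contra hbG
        have hbR : b ∈ R := by
          rcases hC'B hbC' with h | h
          · exact h.1
          · exact absurd h hbm
        exact hmin b (Or.inl ⟨hbR, hbG⟩) (hallC' b hbC' hbm)
      · -- C' ⊆ R : contradicts consistency of R
        have hC'R : C' ⊆ R := by
          intro b hbC'
          rcases hC'B hbC' with h | h
          · exact h.1
          · exact absurd (h : b = m) (by rintro rfl; exact hmC' hbC')
        exact hC'.2.1 (hdc R hRcons C' hC'R)
    have : GlobalImp Cons pr D R B := by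
      refine ⟨hBD, hBcons, ?_, ?_⟩
      · intro h
        exact hm.2 (h ▸ (Or.inr rfl : m ∈ B))
      · intro a ha
        refine ⟨m, ⟨Or.inr rfl, hm.2⟩, ?_⟩
        by_contra hpma
        exact ha.2 (Or.inl ⟨ha.1, hpma⟩)
    exact hR.2 B this
end

section
/- Localization soundness for optimal repairs (first direction): let B_r be weakly-reachable closure of B ⊆ D. If R is a Pareto-optimal repair of the prioritized KB (D, Cons, ≻), then R ∩ B_r is a Pareto-optimal repair of the restricted prioritized KB (B_r, Cons restricted to subsets of B_r, ≻ restricted to B_r). -/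
/-!
Let `β ∉ R` be weakly reachable, lie in a consistent `S`, and dominate every fact of `R ∩ B_r`
missing from `S`. Adding `β` to `R \ (B_r \ S)` and dropping everything `β` dominates cannot give
a consistent set, as that would be a Pareto improvement of `R`. A conflict inside it passes through
`β` (as `R` is consistent) and contains a fact that `β` does not dominate, so it is a weak
reachability edge out of `β`: it lies in `B_r`, hence in `S`, which is absurd. Both the maximality
of `R ∩ B_r` and the absence of Pareto improvements in the restricted KB are instances of this.
-/

variable {α : Type*}

/-- Weak reachability: the least superset of `B` closed under the rule: if β is
reachable, C is a conflict containing β, and some γ ∈ C \ {β} satisfies ¬(β ≻ γ),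
then every element of C is reachable. -/
inductive WeakReach (Confl : Set (Set α)) (pr : α → α → Prop) (B : Set α) : α → Prop
  | base {a : α} : a ∈ B → WeakReach Confl pr B a
  | step {b a : α} {C : Set α} : WeakReach Confl pr B b → C ∈ Confl → b ∈ C →
      (∃ γ ∈ C \ {b}, ¬ pr b γ) → a ∈ C → WeakReach Confl pr B a

section

variable {D : Set α} {Cons : Set (Set α)} {pr : α → α → Prop}

lemma exists_isConflict_subset {T : Set α} (hT : T.Finite) (hTD : T ⊆ D) (hTc : T ∉ Cons) :
    ∃ C ⊆ T, IsConflict D Cons C := by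
  obtain ⟨C, ⟨hCT, hC⟩, hmin⟩ :=
    (hT.finite_subsets.subset fun C (h : C ⊆ T ∧ C ∉ Cons) => h.1).exists_minimal
      ⟨T, subset_rfl, hTc⟩
  refine ⟨C, hCT, hCT.trans hTD, hC, fun C' hC' => ?_⟩
  by_contra hC'c
  exact hC'.not_subset (hmin ⟨hC'.subset.trans hCT, hC'c⟩ hC'.subset)

lemma WeakReach.mem_of_subset {Confl : Set (Set α)} {B : Set α} {a : α} (hB : B ⊆ D)
    (hConfl : ∀ C ∈ Confl, C ⊆ D) (h : WeakReach Confl pr B a) : a ∈ D := by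
  induction h with
  | base ha => exact hB ha
  | step _ hC _ _ haC => exact hConfl _ hC haC

lemma ParetoOpt.exists_isConflict_not_dominated (hD : D.Finite) (hdc : DownwardClosed Cons)
    {R R' : Set α} (hR : ParetoOpt Cons pr D R) (hR' : R' ⊆ R) {β : α} (hβD : β ∈ D)
    (hβR : β ∉ R) (hβc : {β} ∈ Cons) (hdom : ∀ a ∈ R \ R', pr β a) :
    ∃ C ⊆ insert β R', IsConflict D Cons C ∧ β ∈ C ∧ ∃ γ ∈ C \ {β}, ¬ pr β γ := by
  set B' := insert β {a ∈ R' | ¬ pr β a}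
  have hB'D : B' ⊆ D := Set.insert_subset hβD fun a ha => hR.1.1 (hR' ha.1)
  have hB' : B' ∉ Cons := fun hc =>
    hR.2 B' ⟨hB'D, hc, β, ⟨Set.mem_insert β _, hβR⟩, fun a ⟨haR, haB'⟩ => by
      by_cases haR' : a ∈ R'
      · by_contra h
        exact haB' (Set.mem_insert_of_mem β ⟨haR', h⟩)
      · exact hdom a ⟨haR, haR'⟩⟩
  obtain ⟨C, hCB', hC⟩ := exists_isConflict_subset (hD.subset hB'D) hB'D hB'
  have hβC : β ∈ C := by
    by_contra hβC
    refine hC.2.1 (hdc R hR.1.2.1 C fun a ha => hR' ?_)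
    exact ((hCB' ha).resolve_left fun h => hβC (h ▸ ha)).1
  obtain ⟨γ, hγC, hγβ⟩ : ∃ γ ∈ C, γ ≠ β := by
    by_contra! h
    exact hC.2.1 (hdc {β} hβc C h)
  exact ⟨C, hCB'.trans (Set.insert_subset_insert fun a ha => ha.1), hC, hβC, γ, ⟨hγC, hγβ⟩,
    ((hCB' hγC).resolve_left hγβ).2⟩

lemma ParetoOpt.mem_of_weakReach_of_dominates (hD : D.Finite) (hdc : DownwardClosed Cons)
    {B R S : Set α} (hB : B ⊆ D) (hR : ParetoOpt Cons pr D R)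
    {β : α} (hβ : WeakReach {C | IsConflict D Cons C} pr B β) (hS : S ∈ Cons) (hβS : β ∈ S)
    (hdom : ∀ a ∈ (R ∩ {x | WeakReach {C | IsConflict D Cons C} pr B x}) \ S, pr β a) :
    β ∈ R := by
  set Br := {x | WeakReach {C | IsConflict D Cons C} pr B x}
  by_contra hβR
  have hβD : β ∈ D := hβ.mem_of_subset hB fun _ hC => hC.1
  have hdom' : ∀ a ∈ R \ (R \ (Br \ S)), pr β a := fun a ⟨haR, ha⟩ =>
    have haBr : a ∈ Br \ S := not_not.1 fun h => ha ⟨haR, h⟩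
    hdom a ⟨⟨haR, haBr.1⟩, haBr.2⟩
  obtain ⟨C, hCT, hC, hβC, hγ⟩ := hR.exists_isConflict_not_dominated hD hdc Set.sdiff_subset hβD
    hβR (hdc S hS {β} (Set.singleton_subset_iff.2 hβS)) hdom'
  have hCS : C ⊆ S := fun a ha => by
    rcases hCT ha with rfl | ⟨-, haS⟩
    · exact hβS
    · by_contra haS'
      exact haS ⟨WeakReach.step hβ hC hβC hγ ha, haS'⟩
  exact hC.2.1 (hdc S hS C hCS)

end

theorem paretoOpt_localization_sound_general
    (D : Set α) (hD : D.Finite) (Cons : Set (Set α))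
    (hdc : DownwardClosed Cons)
    (pr : α → α → Prop)
    (B : Set α) (hB : B ⊆ D) (R : Set α)
    (hR : ParetoOpt Cons pr D R) :
    ParetoOpt (fun S => S ∈ Cons ∧ S ⊆ {a | WeakReach {C | IsConflict D Cons C} pr B a})
      (fun a b => pr a b ∧ a ∈ {x | WeakReach {C | IsConflict D Cons C} pr B x}
        ∧ b ∈ {x | WeakReach {C | IsConflict D Cons C} pr B x})
      {a | WeakReach {C | IsConflict D Cons C} pr B a}
      (R ∩ {a | WeakReach {C | IsConflict D Cons C} pr B a}) := by
  refine ⟨⟨Set.inter_subset_right, ⟨hdc R hR.1.2.1 _ Set.inter_subset_left,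
    Set.inter_subset_right⟩, fun S hSBr hS hRS => ?_⟩, ?_⟩
  · refine Set.Subset.antisymm (fun β hβS => ⟨?_, hSBr hβS⟩) hRS
    exact hR.mem_of_weakReach_of_dominates hD hdc hB (hSBr hβS) hS.1 hβS
      fun a ha => absurd (hRS ha.1) ha.2
  · rintro S ⟨hSBr, ⟨hS, -⟩, β, ⟨hβS, hβ⟩, hdom⟩
    exact hβ ⟨hR.mem_of_weakReach_of_dominates hD hdc hB (hSBr hβS) hS hβS
      fun a ha => (hdom a ha).1, hSBr hβS⟩

/-- Localization soundness (first direction): if `R` is a Pareto-optimal repair of the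
prioritized KB `(D, Cons, ≻)` and `B_r` is the weak reachability closure of `B ⊆ D`,
then `R ∩ B_r` is a Pareto-optimal repair of the KB restricted to `B_r`. -/
theorem paretoOpt_localization_sound
    (D : Set α) (hD : D.Finite) (Cons : Set (Set α))
    (hdc : DownwardClosed Cons) (hempty : (∅ : Set α) ∈ Cons)
    (pr : α → α → Prop) (hpr : PriorityRel D Cons pr)
    (B : Set α) (hB : B ⊆ D) (R : Set α)
    (hR : ParetoOpt Cons pr D R) :
    ParetoOpt (fun S => S ∈ Cons ∧ S ⊆ {a | WeakReach {C | IsConflict D Cons C} pr B a})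
      (fun a b => pr a b ∧ a ∈ {x | WeakReach {C | IsConflict D Cons C} pr B x}
        ∧ b ∈ {x | WeakReach {C | IsConflict D Cons C} pr B x})
      {a | WeakReach {C | IsConflict D Cons C} pr B a}
      (R ∩ {a | WeakReach {C | IsConflict D Cons C} pr B a}) :=
  paretoOpt_localization_sound_general D hD Cons hdc pr B hB R hR
end

section
/- Localization completeness for Pareto-optimal repairs (second direction): let B_r = R_s(B) be the strong reachability closure of B ⊆ D. If R is a Pareto-optimal repair of the restricted KB on B_r, then there exists a Pareto-optimal repair R' of the full KB such that R = R' ∩ B_r. -/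
variable {α : Type*}

/-- Strong reachability: the least superset of `B` closed under the rule: if α is
reachable, C is a conflict containing α, and α is ≻-minimal in C, then every element
of C is reachable. -/
inductive StrongReach (Confl : Set (Set α)) (pr : α → α → Prop) (B : Set α) : α → Prop
  | base {a : α} : a ∈ B → StrongReach Confl pr B a
  | step {b a : α} {C : Set α} : StrongReach Confl pr B b → C ∈ Confl → b ∈ C →
      (∀ β ∈ C, ¬ pr b β) → a ∈ C → StrongReach Confl pr B a

/-!
Extend `R` greedily: scan `D` along a linear extension of `≻`, preferred facts first, adding
every fact outside `B_r \ R` that keeps the set consistent. Each fact that the resulting `G`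
leaves out, apart from those of `B_r \ R`, is blocked: it lies in a conflict whose other facts
are in `G` and in which it is `≻`-minimal (the facts of `G` met earlier are not below it). A
blocked fact cannot head a Pareto improvement of `G`, and a fact of `B_r \ R` cannot either,
as it would head one of `R` in the restricted KB. Finally no fact of `R` is blocked: by strong
reachability its blocking conflict would lie in `B_r`, hence in `R`. So `R ⊆ G` and
`G ∩ B_r = R`.
-/

theorem exists_conflict_subset {D T : Set α} {Cons : Set (Set α)} (hD : D.Finite)
    (hTD : T ⊆ D) (hT : T ∉ Cons) : ∃ C ⊆ T, IsConflict D Cons C := by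
  have hfin : {C | C ⊆ T ∧ C ∉ Cons}.Finite :=
    (hD.subset hTD).finite_subsets.subset fun _ hC => hC.1
  obtain ⟨C, hC⟩ := hfin.exists_minimal ⟨T, subset_rfl, hT⟩
  exact ⟨C, hC.prop.1, hC.prop.1.trans hTD, hC.prop.2,
    fun C' hC' => by_contra fun h => hC.not_prop_of_lt hC' ⟨hC'.1.trans hC.prop.1, h⟩⟩

theorem Acyclic.irrefl {pr : α → α → Prop} (h : Acyclic pr) (a : α) : ¬ pr a a :=
  fun ha => h a (.single ha)

/-- A linear extension of `pr` on `D`, listed with `pr`-greater facts first. -/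
theorem Acyclic.exists_list_pairwise {pr : α → α → Prop} (h : Acyclic pr) {D : Set α}
    (hD : D.Finite) : ∃ l : List α, (∀ x, x ∈ l ↔ x ∈ D) ∧ l.Pairwise fun x y => ¬ pr y x := by
  classical
  have : IsPartialOrder α (Relation.ReflTransGen pr) :=
    { refl := fun _ => .refl
      trans := fun _ _ _ => .trans
      antisymm := fun a b hab hba => by
        rcases hab.cases_head with rfl | ⟨c, hac, hcb⟩
        · rfl
        · exact (h a (.head' hac (hcb.trans hba))).elim }
  obtain ⟨s, hs, hle⟩ := extend_partialOrder (Relation.ReflTransGen pr)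
  refine ⟨hD.toFinset.sort s, fun x => by rw [Finset.mem_sort, hD.mem_toFinset], ?_⟩
  refine (Finset.pairwise_sort _ s).imp fun {x y} hxy hyx => ?_
  obtain rfl := antisymm hxy (hle _ _ (.single hyx))
  exact h.irrefl x hyx

section Greedy

variable (Cons : Set (Set α)) (A : Set α)

open Classical in
noncomputable def greedyStep (S : Set α) (a : α) : Set α :=
  if a ∈ A ∧ insert a S ∈ Cons then insert a S else S

noncomputable def greedySelect (l : List α) : Set α :=
  l.foldl (greedyStep Cons A) ∅

variable {Cons A}

theorem subset_greedyStep (S : Set α) (a : α) : S ⊆ greedyStep Cons A S a := by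
  unfold greedyStep
  split_ifs
  exacts [Set.subset_insert a S, subset_rfl]

theorem subset_foldl_greedyStep (l : List α) (S : Set α) :
    S ⊆ l.foldl (greedyStep Cons A) S := by
  induction l generalizing S with
  | nil => exact subset_rfl
  | cons a l ih => exact (subset_greedyStep S a).trans (ih _)

theorem foldl_greedyStep_mem (l : List α) {S : Set α} (hS : S ∈ Cons) :
    l.foldl (greedyStep Cons A) S ∈ Cons := by
  induction l generalizing S with
  | nil => exact hS
  | cons a l ih =>
    refine ih ?_
    unfold greedyStep
    split_ifs with h
    exacts [h.2, hS]

theorem foldl_greedyStep_subset (l : List α) (S : Set α) :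
    l.foldl (greedyStep Cons A) S ⊆ S ∪ {x | x ∈ l ∧ x ∈ A} := by
  induction l generalizing S with
  | nil => exact Set.subset_union_left
  | cons a l ih =>
    refine (ih _).trans (Set.union_subset ?_ ?_)
    · unfold greedyStep
      split_ifs with h
      · exact Set.insert_subset (Or.inr ⟨List.mem_cons_self, h.1⟩) Set.subset_union_left
      · exact Set.subset_union_left
    · exact fun x hx => Or.inr ⟨List.mem_cons_of_mem a hx.1, hx.2⟩

theorem greedySelect_mem (hempty : ∅ ∈ Cons) (l : List α) : greedySelect Cons A l ∈ Cons :=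
  foldl_greedyStep_mem l hempty

theorem greedySelect_subset (l : List α) : greedySelect Cons A l ⊆ {x | x ∈ l ∧ x ∈ A} := by
  simpa [greedySelect] using foldl_greedyStep_subset (Cons := Cons) (A := A) l ∅

theorem exists_insert_notMem_of_notMem_greedySelect {l : List α} {β : α} (hβl : β ∈ l)
    (hβA : β ∈ A) (hβG : β ∉ greedySelect Cons A l) :
    ∃ l₁ l₂, l = l₁ ++ β :: l₂ ∧ insert β (greedySelect Cons A l₁) ∉ Cons ∧
      greedySelect Cons A l₁ ⊆ greedySelect Cons A l := by
  obtain ⟨l₁, l₂, rfl⟩ := List.append_of_mem hβl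
  have hsplit : greedySelect Cons A (l₁ ++ β :: l₂) =
      l₂.foldl (greedyStep Cons A) (greedyStep Cons A (greedySelect Cons A l₁) β) := by
    rw [greedySelect, List.foldl_append, List.foldl_cons, greedySelect]
  refine ⟨l₁, l₂, rfl, fun hcons => hβG ?_, ?_⟩
  · rw [hsplit]
    refine subset_foldl_greedyStep l₂ _ ?_
    rw [greedyStep, if_pos ⟨hβA, hcons⟩]
    exact Set.mem_insert β _
  · rw [hsplit]
    exact (subset_greedyStep _ β).trans (subset_foldl_greedyStep l₂ _)

end Greedy

def IsBlocked (D : Set α) (Cons : Set (Set α)) (pr : α → α → Prop) (G : Set α) (β : α) :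
    Prop :=
  ∃ C, IsConflict D Cons C ∧ β ∈ C ∧ C \ {β} ⊆ G ∧ ∀ γ ∈ C, ¬ pr β γ

section Blocked

variable {D : Set α} {Cons : Set (Set α)} {pr : α → α → Prop} {G : Set α} {β : α}

theorem IsBlocked.insert_notMem (h : IsBlocked D Cons pr G β) (hdc : DownwardClosed Cons) :
    insert β G ∉ Cons := by
  obtain ⟨C, hC, hβC, hCG, -⟩ := h
  exact fun hins => hC.2.1 (hdc _ hins C fun x hx =>
    (em (x = β)).imp id fun hxβ => hCG ⟨hx, hxβ⟩)

/-- The conflict is not contained in `B'`, and a missing fact lies in `G \ B'` but is not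
dominated by `β`. -/
theorem IsBlocked.not_forall_pr (h : IsBlocked D Cons pr G β) (hdc : DownwardClosed Cons)
    {B' : Set α} (hB' : B' ∈ Cons) (hβB' : β ∈ B') : ¬ ∀ a ∈ G \ B', pr β a := by
  obtain ⟨C, hC, -, hCG, hmin⟩ := h
  obtain ⟨γ, hγC, hγB'⟩ := Set.not_subset.mp fun hCB' => hC.2.1 (hdc B' hB' C hCB')
  have hγβ : γ ≠ β := fun h => hγB' (h ▸ hβB')
  exact fun hdom => hmin γ hγC (hdom γ ⟨hCG ⟨hγC, hγβ⟩, hγB'⟩)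

theorem isBlocked_of_notMem_greedySelect (hD : D.Finite) (hdc : DownwardClosed Cons)
    (hempty : ∅ ∈ Cons) (hirr : ∀ a, ¬ pr a a) {A : Set α} {l : List α}
    (hlD : ∀ x ∈ l, x ∈ D) (hl : l.Pairwise fun x y => ¬ pr y x) (hβl : β ∈ l)
    (hβA : β ∈ A) (hβG : β ∉ greedySelect Cons A l) :
    IsBlocked D Cons pr (greedySelect Cons A l) β := by
  obtain ⟨l₁, l₂, rfl, hins, hmono⟩ := exists_insert_notMem_of_notMem_greedySelect hβl hβA hβG
  have hG₁l₁ : greedySelect Cons A l₁ ⊆ {x | x ∈ l₁} := fun x hx =>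
    (greedySelect_subset l₁ hx).1
  have hinsD : insert β (greedySelect Cons A l₁) ⊆ D := Set.insert_subset (hlD β hβl)
    fun x hx => hlD x (List.mem_append_left _ (hG₁l₁ hx))
  obtain ⟨C, hCins, hC⟩ := exists_conflict_subset hD hinsD hins
  have hCG₁ : C \ {β} ⊆ greedySelect Cons A l₁ := fun x hx => (hCins hx.1).resolve_left hx.2
  have hβC : β ∈ C := by
    by_contra hβC
    exact hC.2.1 (hdc _ (greedySelect_mem hempty l₁) C fun x hx =>
      hCG₁ ⟨hx, ne_of_mem_of_not_mem hx hβC⟩)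
  refine ⟨C, hC, hβC, hCG₁.trans hmono, fun γ hγC hβγ => ?_⟩
  rcases eq_or_ne γ β with rfl | hγβ
  · exact hirr γ hβγ
  · exact (List.pairwise_append.mp hl).2.2 γ (hG₁l₁ (hCG₁ ⟨hγC, hγβ⟩)) β
      List.mem_cons_self hβγ

theorem isRepair_of_forall_insert_notMem (hdc : DownwardClosed Cons) (hGD : G ⊆ D)
    (hG : G ∈ Cons) (hmax : ∀ x ∈ D, x ∉ G → insert x G ∉ Cons) : IsRepair D Cons G :=
  ⟨hGD, hG, fun S hSD hS hGS => hGS.antisymm' fun x hxS => by_contra fun hxG =>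
    hmax x (hSD hxS) hxG (hdc S hS _ (Set.insert_subset hxS hGS))⟩

end Blocked

theorem StrongReach.mem {D : Set α} {Cons : Set (Set α)} {pr : α → α → Prop} {B : Set α}
    (hB : B ⊆ D) {a : α} (ha : StrongReach {C | IsConflict D Cons C} pr B a) : a ∈ D := by
  induction ha with
  | base h => exact hB h
  | step _ hC _ _ haC _ => exact hC.1 haC

/-- A blocking conflict of a fact of `R` lies in the closure, since the fact is minimal in it. -/
theorem subset_of_isBlocked_of_strongReach {D B R G : Set α} {Cons : Set (Set α)}
    {pr : α → α → Prop} (hdc : DownwardClosed Cons) (hR : R ∈ Cons)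
    (hRBr : R ⊆ {a | StrongReach {C | IsConflict D Cons C} pr B a})
    (hGBr : G ∩ {a | StrongReach {C | IsConflict D Cons C} pr B a} ⊆ R)
    (hblock : ∀ a ∈ R, a ∉ G → IsBlocked D Cons pr G a) : R ⊆ G := fun a haR =>
  by_contra fun haG => by
    obtain ⟨C, hC, haC, hCG, hmin⟩ := hblock a haR haG
    have hCR : C ⊆ R := fun γ hγ => (eq_or_ne γ a).elim (· ▸ haR) fun hγa =>
      hGBr ⟨hCG ⟨hγ, hγa⟩, StrongReach.step (hRBr haR) hC haC hmin hγ⟩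
    exact hC.2.1 (hdc R hR C hCR)

theorem IsRepair.insert_notMem_of_restrict {Cons : Set (Set α)} {Br R : Set α}
    (hR : IsRepair Br (fun S => S ∈ Cons ∧ S ⊆ Br) R) (hdc : DownwardClosed Cons)
    {G : Set α} (hRG : R ⊆ G) {x : α} (hx : x ∈ Br \ R) : insert x G ∉ Cons := fun hins => by
  have hxR : insert x R ⊆ Br := Set.insert_subset hx.1 hR.1
  have := hR.2.2 _ hxR ⟨hdc _ hins _ (Set.insert_subset_insert hRG), hxR⟩ (Set.subset_insert x R)
  exact hx.2 (this ▸ Set.mem_insert x R)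

/-- Otherwise `insert β (B' ∩ R)` would be a Pareto improvement of `R` in the restricted KB. -/
theorem ParetoOpt.not_forall_pr_of_restrict {Cons : Set (Set α)} {pr : α → α → Prop}
    {Br R : Set α}
    (hR : ParetoOpt (fun S => S ∈ Cons ∧ S ⊆ Br) (fun a b => pr a b ∧ a ∈ Br ∧ b ∈ Br) Br R)
    (hdc : DownwardClosed Cons) {G B' : Set α} (hRG : R ⊆ G) {β : α} (hβ : β ∈ Br \ R)
    (hB' : B' ∈ Cons) (hβB' : β ∈ B') : ¬ ∀ a ∈ G \ B', pr β a := by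
  intro hdom
  have hsub : insert β (B' ∩ R) ⊆ Br :=
    Set.insert_subset hβ.1 (Set.inter_subset_right.trans hR.1.1)
  refine hR.2 (insert β (B' ∩ R)) ⟨hsub, ⟨hdc B' hB' _
    (Set.insert_subset hβB' Set.inter_subset_left), hsub⟩, β, ⟨Set.mem_insert β _, hβ.2⟩, ?_⟩
  intro a ⟨haR, ha⟩
  have haB' : a ∉ B' := fun haB' => ha (Or.inr ⟨haB', haR⟩)
  exact ⟨hdom a ⟨hRG haR, haB'⟩, hβ.1, hR.1.1 haR⟩

theorem paretoOpt_localization_complete_general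
    (D : Set α) (hD : D.Finite) (Cons : Set (Set α))
    (hdc : DownwardClosed Cons) (hempty : (∅ : Set α) ∈ Cons)
    (pr : α → α → Prop) (hpr : PriorityRel D Cons pr)
    (B : Set α) (hB : B ⊆ D) (R : Set α)
    (hR : ParetoOpt (fun S => S ∈ Cons ∧ S ⊆ {a | StrongReach {C | IsConflict D Cons C} pr B a})
      (fun a b => pr a b ∧ a ∈ {x | StrongReach {C | IsConflict D Cons C} pr B x}
        ∧ b ∈ {x | StrongReach {C | IsConflict D Cons C} pr B x})
      {a | StrongReach {C | IsConflict D Cons C} pr B a} R) :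
    ∃ R', ParetoOpt Cons pr D R' ∧
      R = R' ∩ {a | StrongReach {C | IsConflict D Cons C} pr B a} := by
  set Br : Set α := {a | StrongReach {C | IsConflict D Cons C} pr B a}
  obtain ⟨l, hlD, hl⟩ := hpr.1.exists_list_pairwise hD
  set G := greedySelect Cons (Br \ R)ᶜ l
  have hblock (β : α) (hβD : β ∈ D) (hβ : β ∉ Br \ R) (hβG : β ∉ G) : IsBlocked D Cons pr G β :=
    isBlocked_of_notMem_greedySelect hD hdc hempty hpr.1.irrefl (fun x hx => (hlD x).1 hx) hl
      ((hlD β).2 hβD) hβ hβG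
  have hGl : G ⊆ {x | x ∈ l ∧ x ∈ (Br \ R)ᶜ} := greedySelect_subset l
  have hGBr : G ∩ Br ⊆ R := fun x hx => by_contra fun hxR => (hGl hx.1).2 ⟨hx.2, hxR⟩
  have hRG : R ⊆ G := subset_of_isBlocked_of_strongReach hdc hR.1.2.1.1 hR.1.1 hGBr
    fun a haR => hblock a (StrongReach.mem hB (hR.1.1 haR)) fun h => h.2 haR
  have hrepair : IsRepair D Cons G := by
    refine isRepair_of_forall_insert_notMem hdc (fun x hx => (hlD x).1 (hGl hx).1)
      (greedySelect_mem hempty l) fun x hxD hxG => ?_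
    by_cases hx : x ∈ Br \ R
    · exact hR.1.insert_notMem_of_restrict hdc hRG hx
    · exact (hblock x hxD hx hxG).insert_notMem hdc
  refine ⟨G, ⟨hrepair, ?_⟩, (Set.subset_inter hRG hR.1.1).antisymm hGBr⟩
  rintro B' ⟨hB'D, hB'c, β, ⟨hβB', hβG⟩, hdom⟩
  by_cases hβ : β ∈ Br \ R
  · exact hR.not_forall_pr_of_restrict hdc hRG hβ hB'c hβB' hdom
  · exact (hblock β (hB'D hβB') hβ hβG).not_forall_pr hdc hB'c hβB' hdom

/-- Localization completeness for Pareto-optimal repairs (second direction): if `R` is a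
Pareto-optimal repair of the KB restricted to the strong reachability closure `B_r` of
`B ⊆ D`, then there is a Pareto-optimal repair `R'` of the full KB with `R = R' ∩ B_r`. -/
theorem paretoOpt_localization_complete
    (D : Set α) (hD : D.Finite) (Cons : Set (Set α))
    (hdc : DownwardClosed Cons) (hempty : (∅ : Set α) ∈ Cons)
    (hsing : ∀ a ∈ D, ({a} : Set α) ∈ Cons)
    (pr : α → α → Prop) (hpr : PriorityRel D Cons pr)
    (B : Set α) (hB : B ⊆ D) (R : Set α)
    (hR : ParetoOpt (fun S => S ∈ Cons ∧ S ⊆ {a | StrongReach {C | IsConflict D Cons C} pr B a})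
      (fun a b => pr a b ∧ a ∈ {x | StrongReach {C | IsConflict D Cons C} pr B x}
        ∧ b ∈ {x | StrongReach {C | IsConflict D Cons C} pr B x})
      {a | StrongReach {C | IsConflict D Cons C} pr B a} R) :
    ∃ R', ParetoOpt Cons pr D R' ∧
      R = R' ∩ {a | StrongReach {C | IsConflict D Cons C} pr B a} :=
  paretoOpt_localization_complete_general D hD Cons hdc hempty pr hpr B hB R hR
end

section
/- Grounded entailment implies P-IAR at the level of sets: the grounded repair is contained in every Pareto-optimal repair (in the setting where all conflicts have size 2). Consequently, the grounded repair is contained in the intersection of all Pareto-optimal repairs. -/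
variable {α : Type*}

/-- Binary attack relation: {β} ⇝ a whenever {a, β} is a conflict and ¬(a ≻ β). -/
def BinAtt (Confl : Set (Set α)) (pr : α → α → Prop) (β a : α) : Prop :=
  ({a, β} : Set α) ∈ Confl ∧ ¬ pr a β

/-- The characteristic function of the binary attack framework. -/
def BinGamma (D : Set α) (Confl : Set (Set α)) (pr : α → α → Prop) (B : Set α) :
    Set α :=
  {a ∈ D | ∀ β, BinAtt Confl pr β a → ∃ γ ∈ B, BinAtt Confl pr γ β}

/-- In the binary-conflict setting, the grounded repair (the least fixpoint of Γ) is
contained in every Pareto-optimal repair, hence in the intersection of all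
Pareto-optimal repairs. -/
theorem grounded_subset_paretoOpt
    (D : Set α) (hD : D.Finite)
    (Confl : Set (Set α)) (hConfD : ∀ C ∈ Confl, C ⊆ D)
    (hbin : ∀ C ∈ Confl, ∃ a b, a ≠ b ∧ C = {a, b})
    (pr : α → α → Prop) (hacyc : Acyclic pr)
    (hprConf : ∀ a b, pr a b → ({a, b} : Set α) ∈ Confl)
    (Cons : Set (Set α)) (hCons : Cons = {S | S ⊆ D ∧ ∀ C ∈ Confl, ¬ C ⊆ S})
    (G : Set α) (hGfix : BinGamma D Confl pr G = G)
    (hGleast : ∀ S, BinGamma D Confl pr S = S → G ⊆ S) :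
    (∀ R, ParetoOpt Cons pr D R → G ⊆ R) ∧
    G ⊆ ⋂₀ {R | ParetoOpt Cons pr D R} := by

  -- Monotonicity of Γ
  have mono : ∀ S T : Set α, S ⊆ T →
      BinGamma D Confl pr S ⊆ BinGamma D Confl pr T := by
    intro S T hST a ha
    refine ⟨ha.1, fun β hβ => ?_⟩
    obtain ⟨γ, hγS, hγ⟩ := ha.2 β hβ
    exact ⟨γ, hST hγS, hγ⟩
  -- The Knaster–Tarski least fixpoint
  set L : Set α := ⋂₀ {B | BinGamma D Confl pr B ⊆ B} with hL
  have hLpre : BinGamma D Confl pr L ⊆ L := by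
    intro a ha
    refine Set.mem_sInter.mpr fun B hB => hB (mono L B (Set.sInter_subset_of_mem hB) ha)
  have hLfix : BinGamma D Confl pr L = L := by
    apply Set.Subset.antisymm hLpre
    exact Set.sInter_subset_of_mem (mono _ _ hLpre)
  have hGL : G ⊆ L := hGleast L hLfix
  have key : ∀ R, ParetoOpt Cons pr D R → G ⊆ R := by
    intro R hR
    obtain ⟨⟨hRD, hRCons, hRmax⟩, hRpar⟩ := hR
    have hRc : ∀ C ∈ Confl, ¬ C ⊆ R := by
      rw [hCons] at hRCons; exact hRCons.2
    have hpre : BinGamma D Confl pr R ⊆ R := by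
      intro a ha
      obtain ⟨haD, hatt⟩ := ha
      by_contra haR
      -- every b ∈ R in conflict with a is strictly dominated: pr a b
      have hdom : ∀ b ∈ R, ({a, b} : Set α) ∈ Confl → pr a b := by
        intro b hbR hconf
        by_contra hnpr
        obtain ⟨γ, hγR, hγc, _⟩ := hatt b ⟨hconf, hnpr⟩
        refine hRc _ hγc ?_
        intro x hx
        rcases hx with rfl | rfl
        · exact hbR
        · exact hγR
      -- build a Pareto improvement
      set B : Set α := insert a {x ∈ R | ({a, x} : Set α) ∉ Confl} with hB
      apply hRpar B
      refine ⟨?_, ?_, a, ⟨Set.mem_insert _ _, haR⟩, ?_⟩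
      · intro x hx
        rcases hx with rfl | hx
        · exact haD
        · exact hRD hx.1
      · rw [hCons]
        refine ⟨?_, ?_⟩
        · intro x hx
          rcases hx with rfl | hx
          · exact haD
          · exact hRD hx.1
        · intro C hC hCB
          obtain ⟨u, v, huv, rfl⟩ := hbin C hC
          have hu := hCB (Set.mem_insert _ _)
          have hv := hCB (Set.mem_insert_of_mem u rfl)
          rcases hu with rfl | hu
          · rcases hv with rfl | hv
            · exact huv rfl
            · exact hv.2 hC
          · rcases hv with rfl | hv
            · exact hu.2 (Set.pair_comm u v ▸ hC)
            · refine hRc _ hC ?_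
              intro x hx
              rcases hx with rfl | rfl
              · exact hu.1
              · exact hv.1
      · intro x hx
        obtain ⟨hxR, hxB⟩ := hx
        have hconf : ({a, x} : Set α) ∈ Confl := by
          by_contra h
          exact hxB (Set.mem_insert_of_mem a ⟨hxR, h⟩)
        exact hdom x hxR hconf
    have hLR : L ⊆ R := Set.sInter_subset_of_mem hpre
    exact hGL.trans hLR
  refine ⟨key, fun x hx => Set.mem_sInter.mpr fun R hR => key R hR hx⟩
end
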